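/- Accuracy of the extended global indicator τ_4: Let f be smooth and define τ_4 = |(f(x_j+2h) − 3f(x_j+h) + 3f(x_j) − f(x_j−h))·(2f(x_j+h) − 3f(x_j) + f(x_j−h))|. Then (i) τ_4 = |f′(x_j)·f‴(x_j)|·h⁴ + O(h⁵) in general; and (ii) if f′(x_c) = 0 at x_c = x_j + λ·h with λ ∈ (−1,1), then τ_4 = |(3/2 − λ)·f″(x_c)·f‴(x_c)|·h⁵ + O(h⁶); in particular τ_4 = O(h⁵) whenever a first-order critical point occurs anywhere in the interval. -/

import Mathlib

lemma taylor_peano (x₀ R : ℝ) (hR : 0 ≤ R) :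
    ∀ (m : ℕ) (f : ℝ → ℝ), ContDiff ℝ (⊤ : ℕ∞) f →
    ∃ C, 0 ≤ C ∧ ∀ x ∈ Set.Icc (x₀ - R) (x₀ + R),
      |f x - ∑ i ∈ Finset.range (m + 1),
          iteratedDeriv i f x₀ / (Nat.factorial i) * (x - x₀) ^ i|
        ≤ C * |x - x₀| ^ (m + 1) := by
  intro m
  induction m with
  | zero =>
    intro f hf
    obtain ⟨C, hC⟩ := (isCompact_Icc (a := x₀ - R) (b := x₀ + R)).exists_bound_of_continuousOn
      (hf.continuous_deriv (by exact_mod_cast le_top)).continuousOn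
    refine ⟨max C 0, le_max_right _ _, ?_⟩
    intro x hx
    have hx₀ : x₀ ∈ Set.Icc (x₀ - R) (x₀ + R) := by constructor <;> linarith
    have := (convex_Icc (x₀ - R) (x₀ + R)).norm_image_sub_le_of_norm_hasDerivWithin_le
      (C := max C 0) (f' := deriv f)
      (fun y _ => ((hf.differentiable (by simp)) y).hasDerivAt.hasDerivWithinAt)
      (fun y hy => le_trans (hC y hy) (le_max_left _ _)) hx₀ hx
    simpa [Real.norm_eq_abs] using this
  | succ m ih =>
    intro f hf
    have hfd : Differentiable ℝ f := hf.differentiable (by simp)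
    have hg : ContDiff ℝ (⊤ : ℕ∞) (deriv f) := (contDiff_infty_iff_deriv.mp hf).2
    obtain ⟨C, hC0, hC⟩ := ih (deriv f) hg
    refine ⟨C, hC0, ?_⟩
    intro x hx
    set T : ℝ → ℝ := fun y => ∑ i ∈ Finset.range (m + 2),
        iteratedDeriv i f x₀ / (Nat.factorial i) * (y - x₀) ^ i with hT
    have hderiv : ∀ y : ℝ, HasDerivAt (fun z => f z - T z)
        (deriv f y - ∑ i ∈ Finset.range (m + 1),
          iteratedDeriv i (deriv f) x₀ / (Nat.factorial i) * (y - x₀) ^ i) y := by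
      intro y
      have h1 : HasDerivAt T (∑ i ∈ Finset.range (m + 2),
          iteratedDeriv i f x₀ / (Nat.factorial i) * ((i : ℝ) * (y - x₀) ^ (i - 1) * 1)) y := by
        apply HasDerivAt.fun_sum
        intro i _
        exact (((hasDerivAt_id y).sub_const x₀).pow i).const_mul _
      have h2 : (∑ i ∈ Finset.range (m + 2),
          iteratedDeriv i f x₀ / (Nat.factorial i) * ((i : ℝ) * (y - x₀) ^ (i - 1) * 1))
          = ∑ i ∈ Finset.range (m + 1),
            iteratedDeriv i (deriv f) x₀ / (Nat.factorial i) * (y - x₀) ^ i := by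
        rw [Finset.sum_range_succ']
        simp only [Nat.cast_zero, zero_mul, mul_zero, add_zero, Nat.cast_ofNat]
        apply Finset.sum_congr rfl
        intro i _
        rw [← iteratedDeriv_succ', Nat.factorial_succ, Nat.add_sub_cancel]
        have h0 : (Nat.factorial i : ℝ) ≠ 0 := Nat.cast_ne_zero.mpr (Nat.factorial_ne_zero i)
        push_cast
        field_simp
      have h3 := (hfd y).hasDerivAt.sub h1
      rw [h2] at h3
      exact h3
    have hTx₀ : T x₀ = f x₀ := by
      rw [hT]
      simp [Finset.sum_range_succ']
    have huIcc : Set.uIcc x₀ x ⊆ Set.Icc (x₀ - R) (x₀ + R) := by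
      intro y hy
      rcases Set.mem_uIcc.mp hy with ⟨h1, h2⟩ | ⟨h1, h2⟩ <;>
        exact ⟨by rcases hx with ⟨a, b⟩; linarith, by rcases hx with ⟨a, b⟩; linarith⟩
    have hyx : ∀ y ∈ Set.uIcc x₀ x, |y - x₀| ≤ |x - x₀| := by
      intro y hy
      rcases Set.mem_uIcc.mp hy with ⟨h1, h2⟩ | ⟨h1, h2⟩ <;>
        (rw [abs_le]; constructor <;>
          nlinarith [le_abs_self (x - x₀), neg_abs_le (x - x₀), abs_nonneg (x - x₀)])
    have hbound : ∀ y ∈ Set.uIcc x₀ x,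
        ‖deriv f y - ∑ i ∈ Finset.range (m + 1),
          iteratedDeriv i (deriv f) x₀ / (Nat.factorial i) * (y - x₀) ^ i‖
          ≤ C * |x - x₀| ^ (m + 1) := by
      intro y hy
      refine le_trans (hC y (huIcc hy)) ?_
      exact mul_le_mul_of_nonneg_left (pow_le_pow_left₀ (abs_nonneg _) (hyx y hy) _) hC0
    have hmvt := (convex_uIcc x₀ x).norm_image_sub_le_of_norm_hasDerivWithin_le
      (fun y _ => (hderiv y).hasDerivWithinAt) hbound
      (Set.left_mem_uIcc) (Set.right_mem_uIcc)
    rw [hTx₀] at hmvt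
    simp only [sub_self, sub_zero, Real.norm_eq_abs] at hmvt
    calc |f x - T x| ≤ C * |x - x₀| ^ (m + 1) * |x - x₀| := hmvt
      _ = C * |x - x₀| ^ (m + 1 + 1) := by ring

lemma taylor_expand (f : ℝ → ℝ) (hf : ContDiff ℝ (⊤ : ℕ∞) f) (x₀ a : ℝ) (m : ℕ) :
    ∃ C, 0 ≤ C ∧ ∀ h : ℝ, |h| ≤ 1 →
      |f (x₀ + a * h) - ∑ i ∈ Finset.range (m + 1),
          iteratedDeriv i f x₀ / (Nat.factorial i) * (a * h) ^ i|
        ≤ C * |h| ^ (m + 1) := by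
  obtain ⟨C, hC0, hC⟩ := taylor_peano x₀ |a| (abs_nonneg a) m f hf
  refine ⟨C * |a| ^ (m + 1), by positivity, ?_⟩
  intro h hh
  have hx : x₀ + a * h ∈ Set.Icc (x₀ - |a|) (x₀ + |a|) := by
    have h1 : |a * h| ≤ |a| := by
      rw [abs_mul]
      nlinarith [abs_nonneg a, abs_nonneg h]
    have h2 := abs_le.mp h1
    constructor <;> [linarith [h2.1]; linarith [h2.2]]
  have hkey := hC _ hx
  rw [add_sub_cancel_left] at hkey
  calc |f (x₀ + a * h) - ∑ i ∈ Finset.range (m + 1),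
      iteratedDeriv i f x₀ / (Nat.factorial i) * (a * h) ^ i|
      ≤ C * |a * h| ^ (m + 1) := hkey
    _ = C * |a| ^ (m + 1) * |h| ^ (m + 1) := by rw [abs_mul, mul_pow]; ring

lemma expand4 (f : ℝ → ℝ) (hf : ContDiff ℝ (⊤ : ℕ∞) f) (x₀ a : ℝ) :
    ∃ C, 0 ≤ C ∧ ∀ h : ℝ, |h| ≤ 1 →
      |f (x₀ + a * h) - (f x₀ + deriv f x₀ * (a * h)
          + iteratedDeriv 2 f x₀ / 2 * (a * h) ^ 2
          + iteratedDeriv 3 f x₀ / 6 * (a * h) ^ 3)|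
        ≤ C * |h| ^ 4 := by
  obtain ⟨C, hC0, hC⟩ := taylor_expand f hf x₀ a 3
  refine ⟨C, hC0, fun h hh => ?_⟩
  have heq : (f x₀ + deriv f x₀ * (a * h) + iteratedDeriv 2 f x₀ / 2 * (a * h) ^ 2
      + iteratedDeriv 3 f x₀ / 6 * (a * h) ^ 3)
      = ∑ i ∈ Finset.range (3 + 1),
          iteratedDeriv i f x₀ / (Nat.factorial i) * (a * h) ^ i := by
    rw [Finset.sum_range_succ, Finset.sum_range_succ, Finset.sum_range_succ,
      Finset.sum_range_one]
    norm_num [Nat.factorial, iteratedDeriv_one]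
  rw [heq]
  exact hC h hh

lemma expand3 (f : ℝ → ℝ) (hf : ContDiff ℝ (⊤ : ℕ∞) f) (x₀ a : ℝ) :
    ∃ C, 0 ≤ C ∧ ∀ h : ℝ, |h| ≤ 1 →
      |f (x₀ + a * h) - (f x₀ + deriv f x₀ * (a * h)
          + iteratedDeriv 2 f x₀ / 2 * (a * h) ^ 2)|
        ≤ C * |h| ^ 3 := by
  obtain ⟨C, hC0, hC⟩ := taylor_expand f hf x₀ a 2
  refine ⟨C, hC0, fun h hh => ?_⟩
  have heq : (f x₀ + deriv f x₀ * (a * h) + iteratedDeriv 2 f x₀ / 2 * (a * h) ^ 2)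
      = ∑ i ∈ Finset.range (2 + 1),
          iteratedDeriv i f x₀ / (Nat.factorial i) * (a * h) ^ i := by
    rw [Finset.sum_range_succ, Finset.sum_range_succ, Finset.sum_range_one]
    norm_num [Nat.factorial, iteratedDeriv_one]
  rw [heq]
  exact hC h hh

lemma prod_bound1 (G K1 K2 A B g k h : ℝ) (h0 : 0 < h) (h1 : h ≤ 1)
    (hA : 0 ≤ A) (hB : 0 ≤ B)
    (hg : |g - G * h ^ 3| ≤ A * h ^ 4)
    (hk : |k - (K1 * h + K2 * h ^ 2)| ≤ B * h ^ 3) :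
    |(|g * k| - |G * K1| * h ^ 4)| ≤ (|G| * (|K2| + B) + A * (|K1| + |K2| + B)) * h ^ 5 := by
  have habs : |(|g * k| - |G * K1| * h ^ 4)| ≤ |g * k - G * K1 * h ^ 4| := by
    have he : |G * K1| * h ^ 4 = |G * K1 * h ^ 4| := by
      rw [abs_mul (G * K1), abs_of_nonneg (by positivity : (0:ℝ) ≤ h ^ 4)]
    rw [he]
    exact abs_abs_sub_abs_le_abs_sub _ _
  refine habs.trans ?_
  have h2 : h ^ 2 ≤ h := by nlinarith
  have h3 : h ^ 3 ≤ h := by nlinarith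
  have h65 : h ^ 6 ≤ h ^ 5 := pow_le_pow_of_le_one h0.le h1 (by norm_num)
  have hk' : |k| ≤ (|K1| + |K2| + B) * h := by
    have hsum : |K1 * h + K2 * h ^ 2| ≤ |K1| * h + |K2| * h ^ 2 := by
      refine (abs_add_le _ _).trans ?_
      rw [abs_mul, abs_mul, abs_of_pos h0, abs_pow, abs_of_pos h0]
    calc |k| = |(k - (K1 * h + K2 * h ^ 2)) + (K1 * h + K2 * h ^ 2)| := by ring_nf
      _ ≤ |k - (K1 * h + K2 * h ^ 2)| + |K1 * h + K2 * h ^ 2| := abs_add_le _ _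
      _ ≤ B * h ^ 3 + (|K1| * h + |K2| * h ^ 2) := add_le_add hk hsum
      _ ≤ (|K1| + |K2| + B) * h := by nlinarith [abs_nonneg K1, abs_nonneg K2]
  have key : g * k - G * K1 * h ^ 4
      = (g - G * h ^ 3) * k + G * h ^ 3 * (k - (K1 * h + K2 * h ^ 2)) + G * K2 * h ^ 5 := by
    ring
  rw [key]
  have t1 : |(g - G * h ^ 3) * k| ≤ A * (|K1| + |K2| + B) * h ^ 5 := by
    rw [abs_mul]
    calc |g - G * h ^ 3| * |k| ≤ (A * h ^ 4) * ((|K1| + |K2| + B) * h) :=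
        mul_le_mul hg hk' (abs_nonneg _) (by positivity)
      _ = A * (|K1| + |K2| + B) * h ^ 5 := by ring
  have t2 : |G * h ^ 3 * (k - (K1 * h + K2 * h ^ 2))| ≤ |G| * B * h ^ 5 := by
    rw [abs_mul, abs_mul, abs_pow, abs_of_pos h0]
    calc |G| * h ^ 3 * |k - (K1 * h + K2 * h ^ 2)| ≤ |G| * h ^ 3 * (B * h ^ 3) :=
        mul_le_mul_of_nonneg_left hk (by positivity)
      _ = |G| * B * h ^ 6 := by ring
      _ ≤ |G| * B * h ^ 5 := mul_le_mul_of_nonneg_left h65 (by positivity)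
  have t3 : |G * K2 * h ^ 5| = |G| * |K2| * h ^ 5 := by
    rw [abs_mul, abs_mul, abs_pow, abs_of_pos h0]
  calc |(g - G * h ^ 3) * k + G * h ^ 3 * (k - (K1 * h + K2 * h ^ 2)) + G * K2 * h ^ 5|
      ≤ |(g - G * h ^ 3) * k + G * h ^ 3 * (k - (K1 * h + K2 * h ^ 2))| + |G * K2 * h ^ 5| :=
        abs_add_le _ _
    _ ≤ |(g - G * h ^ 3) * k| + |G * h ^ 3 * (k - (K1 * h + K2 * h ^ 2))| + |G * K2 * h ^ 5| :=
        add_le_add_left (abs_add_le _ _) _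
    _ ≤ A * (|K1| + |K2| + B) * h ^ 5 + |G| * B * h ^ 5 + |G| * |K2| * h ^ 5 := by
        rw [t3] at *; linarith
    _ = (|G| * (|K2| + B) + A * (|K1| + |K2| + B)) * h ^ 5 := by ring

lemma prod_bound2 (G K2 A B g k h : ℝ) (h0 : 0 < h) (h1 : h ≤ 1)
    (hA : 0 ≤ A) (hB : 0 ≤ B)
    (hg : |g - G * h ^ 3| ≤ A * h ^ 4)
    (hk : |k - K2 * h ^ 2| ≤ B * h ^ 3) :
    |(|g * k| - |G * K2| * h ^ 5)| ≤ (A * (|K2| + B) + |G| * B) * h ^ 6 := by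
  have habs : |(|g * k| - |G * K2| * h ^ 5)| ≤ |g * k - G * K2 * h ^ 5| := by
    have he : |G * K2| * h ^ 5 = |G * K2 * h ^ 5| := by
      rw [abs_mul (G * K2), abs_of_nonneg (by positivity : (0:ℝ) ≤ h ^ 5)]
    rw [he]
    exact abs_abs_sub_abs_le_abs_sub _ _
  refine habs.trans ?_
  have h32 : h ^ 3 ≤ h ^ 2 := pow_le_pow_of_le_one h0.le h1 (by norm_num)
  have hk' : |k| ≤ (|K2| + B) * h ^ 2 := by
    calc |k| = |(k - K2 * h ^ 2) + K2 * h ^ 2| := by ring_nf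
      _ ≤ |k - K2 * h ^ 2| + |K2 * h ^ 2| := abs_add_le _ _
      _ ≤ B * h ^ 3 + |K2| * h ^ 2 := by
          refine add_le_add hk ?_
          rw [abs_mul, abs_pow, abs_of_pos h0]
      _ ≤ (|K2| + B) * h ^ 2 := by nlinarith [abs_nonneg K2]
  have key : g * k - G * K2 * h ^ 5
      = (g - G * h ^ 3) * k + G * h ^ 3 * (k - K2 * h ^ 2) := by ring
  rw [key]
  have t1 : |(g - G * h ^ 3) * k| ≤ A * (|K2| + B) * h ^ 6 := by
    rw [abs_mul]
    calc |g - G * h ^ 3| * |k| ≤ (A * h ^ 4) * ((|K2| + B) * h ^ 2) :=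
        mul_le_mul hg hk' (abs_nonneg _) (by positivity)
      _ = A * (|K2| + B) * h ^ 6 := by ring
  have t2 : |G * h ^ 3 * (k - K2 * h ^ 2)| ≤ |G| * B * h ^ 6 := by
    rw [abs_mul, abs_mul, abs_pow, abs_of_pos h0]
    calc |G| * h ^ 3 * |k - K2 * h ^ 2| ≤ |G| * h ^ 3 * (B * h ^ 3) :=
        mul_le_mul_of_nonneg_left hk (by positivity)
      _ = |G| * B * h ^ 6 := by ring
  calc |(g - G * h ^ 3) * k + G * h ^ 3 * (k - K2 * h ^ 2)|
      ≤ |(g - G * h ^ 3) * k| + |G * h ^ 3 * (k - K2 * h ^ 2)| := abs_add_le _ _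
    _ ≤ A * (|K2| + B) * h ^ 6 + |G| * B * h ^ 6 := add_le_add t1 t2
    _ = (A * (|K2| + B) + |G| * B) * h ^ 6 := by ring

/-- Accuracy of `τ₄`. -/
theorem weno3_tau4_accuracy' (f : ℝ → ℝ) (hf : ContDiff ℝ (⊤ : ℕ∞) f) :
    (∀ xj : ℝ, ∃ C > 0, ∃ ε > 0, ∀ h ∈ Set.Ioo (0:ℝ) ε,
      |(|(f (xj + 2 * h) - 3 * f (xj + h) + 3 * f xj - f (xj - h)) *
    (2 * f (xj + h) - 3 * f xj + f (xj - h))|) - |deriv f xj * iteratedDeriv 3 f xj| * h ^ 4| ≤ C * h ^ 5) := by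
  have hf' : ContDiff ℝ (⊤ : ℕ∞) f := hf.of_le (by simp)
  intro xj
  obtain ⟨C2, hC20, hC2⟩ := expand4 f hf' xj 2
  obtain ⟨C1, hC10, hC1⟩ := expand4 f hf' xj 1
  obtain ⟨Cm, hCm0, hCm⟩ := expand4 f hf' xj (-1)
  obtain ⟨D1, hD10, hD1⟩ := expand3 f hf' xj 1
  obtain ⟨Dm, hDm0, hDm⟩ := expand3 f hf' xj (-1)
  refine ⟨|iteratedDeriv 3 f xj| * (|3 / 2 * iteratedDeriv 2 f xj| + (2 * D1 + Dm))
      + (C2 + 3 * C1 + Cm) * (|deriv f xj| + |3 / 2 * iteratedDeriv 2 f xj| + (2 * D1 + Dm)) + 1,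
    by positivity, 1, one_pos, ?_⟩
  rintro h ⟨h0, h1⟩
  have hh1 : |h| ≤ 1 := by rw [abs_of_pos h0]; linarith
  have hr2 := hC2 h hh1
  have hr1 := hC1 h hh1
  have hrm := hCm h hh1
  have hs1 := hD1 h hh1
  have hsm := hDm h hh1
  rw [show xj + 1 * h = xj + h from by ring] at hr1 hs1
  rw [show xj + -1 * h = xj - h from by ring] at hrm hsm
  rw [abs_of_pos h0] at hr2 hr1 hrm hs1 hsm
  set g := f (xj + 2 * h) - 3 * f (xj + h) + 3 * f xj - f (xj - h) with hgdef
  set k := 2 * f (xj + h) - 3 * f xj + f (xj - h) with hkdef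
  have a2 := abs_le.mp hr2
  have a1 := abs_le.mp hr1
  have am := abs_le.mp hrm
  have b1 := abs_le.mp hs1
  have bm := abs_le.mp hsm
  have hg : |g - iteratedDeriv 3 f xj * h ^ 3| ≤ (C2 + 3 * C1 + Cm) * h ^ 4 := by
    rw [abs_le, hgdef]
    constructor <;> linarith [a2.1, a2.2, a1.1, a1.2, am.1, am.2]
  have hk : |k - (deriv f xj * h + (3 / 2 * iteratedDeriv 2 f xj) * h ^ 2)|
      ≤ (2 * D1 + Dm) * h ^ 3 := by
    rw [abs_le, hkdef]
    constructor <;> linarith [b1.1, b1.2, bm.1, bm.2]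
  have main := prod_bound1 (iteratedDeriv 3 f xj) (deriv f xj)
    (3 / 2 * iteratedDeriv 2 f xj) (C2 + 3 * C1 + Cm) (2 * D1 + Dm) g k h h0 h1.le
    (by linarith) (by linarith) hg hk
  rw [mul_comm (deriv f xj) (iteratedDeriv 3 f xj)]
  linarith [main, pow_pos h0 5]

theorem weno3_tau4_crit (f : ℝ → ℝ) (hf : ContDiff ℝ (⊤ : ℕ∞) f) (xc lam : ℝ)
    (hcrit : deriv f xc = 0) :
    ∃ C > 0, ∃ ε > 0, ∀ h ∈ Set.Ioo (0:ℝ) ε,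
      |(|(f (xc - lam * h + 2 * h) - 3 * f (xc - lam * h + h) + 3 * f (xc - lam * h)
            - f (xc - lam * h - h)) *
          (2 * f (xc - lam * h + h) - 3 * f (xc - lam * h) + f (xc - lam * h - h))|)
        - |(3 / 2 - lam) * iteratedDeriv 2 f xc * iteratedDeriv 3 f xc| * h ^ 5|
      ≤ C * h ^ 6 := by
  have hf' : ContDiff ℝ (⊤ : ℕ∞) f := hf.of_le (by simp)
  obtain ⟨C2, hC20, hC2⟩ := expand4 f hf' xc (2 - lam)
  obtain ⟨C1, hC10, hC1⟩ := expand4 f hf' xc (1 - lam)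
  obtain ⟨C0, hC00, hC0⟩ := expand4 f hf' xc (-lam)
  obtain ⟨Cm, hCm0, hCm⟩ := expand4 f hf' xc (-1 - lam)
  obtain ⟨D1, hD10, hD1⟩ := expand3 f hf' xc (1 - lam)
  obtain ⟨D0, hD00, hD0⟩ := expand3 f hf' xc (-lam)
  obtain ⟨Dm, hDm0, hDm⟩ := expand3 f hf' xc (-1 - lam)
  refine ⟨(C2 + 3 * C1 + 3 * C0 + Cm) * (|(3 / 2 - lam) * iteratedDeriv 2 f xc|
        + (2 * D1 + 3 * D0 + Dm))
      + |iteratedDeriv 3 f xc| * (2 * D1 + 3 * D0 + Dm) + 1,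
    by positivity, 1, one_pos, ?_⟩
  rintro h ⟨h0, h1⟩
  have hh1 : |h| ≤ 1 := by rw [abs_of_pos h0]; linarith
  have hr2 := hC2 h hh1
  have hr1 := hC1 h hh1
  have hr0 := hC0 h hh1
  have hrm := hCm h hh1
  have hs1 := hD1 h hh1
  have hs0 := hD0 h hh1
  have hsm := hDm h hh1
  rw [show xc + (2 - lam) * h = xc - lam * h + 2 * h from by ring] at hr2
  rw [show xc + (1 - lam) * h = xc - lam * h + h from by ring] at hr1 hs1
  rw [show xc + -lam * h = xc - lam * h from by ring] at hr0 hs0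
  rw [show xc + (-1 - lam) * h = xc - lam * h - h from by ring] at hrm hsm
  rw [abs_of_pos h0] at hr2 hr1 hr0 hrm hs1 hs0 hsm
  rw [hcrit] at hr2 hr1 hr0 hrm hs1 hs0 hsm
  set g := f (xc - lam * h + 2 * h) - 3 * f (xc - lam * h + h) + 3 * f (xc - lam * h)
      - f (xc - lam * h - h) with hgdef
  set k := 2 * f (xc - lam * h + h) - 3 * f (xc - lam * h) + f (xc - lam * h - h) with hkdef
  have a2 := abs_le.mp hr2
  have a1 := abs_le.mp hr1
  have a0 := abs_le.mp hr0
  have am := abs_le.mp hrm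
  have b1 := abs_le.mp hs1
  have b0 := abs_le.mp hs0
  have bm := abs_le.mp hsm
  have hg : |g - iteratedDeriv 3 f xc * h ^ 3| ≤ (C2 + 3 * C1 + 3 * C0 + Cm) * h ^ 4 := by
    rw [abs_le, hgdef]
    constructor <;> linarith [a2.1, a2.2, a1.1, a1.2, a0.1, a0.2, am.1, am.2]
  have hk : |k - ((3 / 2 - lam) * iteratedDeriv 2 f xc) * h ^ 2|
      ≤ (2 * D1 + 3 * D0 + Dm) * h ^ 3 := by
    rw [abs_le, hkdef]
    constructor <;> linarith [b1.1, b1.2, b0.1, b0.2, bm.1, bm.2]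
  have main := prod_bound2 (iteratedDeriv 3 f xc) ((3 / 2 - lam) * iteratedDeriv 2 f xc)
    (C2 + 3 * C1 + 3 * C0 + Cm) (2 * D1 + 3 * D0 + Dm) g k h h0 h1.le
    (by linarith) (by linarith) hg hk
  rw [show (3 / 2 - lam) * iteratedDeriv 2 f xc * iteratedDeriv 3 f xc
      = iteratedDeriv 3 f xc * ((3 / 2 - lam) * iteratedDeriv 2 f xc) from by ring]
  linarith [main, pow_pos h0 6]

/-- The extended global indicator `τ₄` of WENO3-Z_ES4 (Eq. 21) at node `x`. -/
noncomputable def wenoTau4 (f : ℝ → ℝ) (x h : ℝ) : ℝ :=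
  |(f (x + 2 * h) - 3 * f (x + h) + 3 * f x - f (x - h)) *
    (2 * f (x + h) - 3 * f x + f (x - h))|

/-- Accuracy of `τ₄`: fourth order in smooth regions and fifth order at an
arbitrarily located first-order critical point `x_c = x_j + λ·h`. -/
theorem weno3_tau4_accuracy (f : ℝ → ℝ) (hf : ContDiff ℝ (⊤ : ℕ∞) f) :
    (∀ xj : ℝ, ∃ C > 0, ∃ ε > 0, ∀ h ∈ Set.Ioo (0:ℝ) ε,
      |wenoTau4 f xj h - |deriv f xj * iteratedDeriv 3 f xj| * h ^ 4| ≤ C * h ^ 5) ∧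
    (∀ xc lam : ℝ, lam ∈ Set.Ioo (-1 : ℝ) 1 → deriv f xc = 0 →
      (∃ C > 0, ∃ ε > 0, ∀ h ∈ Set.Ioo (0:ℝ) ε,
        |wenoTau4 f (xc - lam * h) h -
            |(3 / 2 - lam) * iteratedDeriv 2 f xc * iteratedDeriv 3 f xc| * h ^ 5|
          ≤ C * h ^ 6) ∧
      (∃ C > 0, ∃ ε > 0, ∀ h ∈ Set.Ioo (0:ℝ) ε,
        wenoTau4 f (xc - lam * h) h ≤ C * h ^ 5)) := by
  constructor
  · intro xj
    obtain ⟨C, hC, ε, hε, hb⟩ := weno3_tau4_accuracy' f hf xj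
    refine ⟨C, hC, ε, hε, fun h hh => ?_⟩
    simp only [wenoTau4]
    exact hb h hh
  · intro xc lam _hlam hcrit
    obtain ⟨C, hC, ε, hε, hb⟩ := weno3_tau4_crit f hf xc lam hcrit
    constructor
    · refine ⟨C, hC, ε, hε, fun h hh => ?_⟩
      simp only [wenoTau4]
      exact hb h hh
    · refine ⟨|(3 / 2 - lam) * iteratedDeriv 2 f xc * iteratedDeriv 3 f xc| + C,
        by linarith [abs_nonneg ((3 / 2 - lam) * iteratedDeriv 2 f xc * iteratedDeriv 3 f xc)],
        min ε 1, lt_min hε one_pos, ?_⟩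
      rintro h ⟨h0, h1⟩
      have hb' := hb h ⟨h0, lt_of_lt_of_le h1 (min_le_left _ _)⟩
      have h11 : h ≤ 1 := le_of_lt (lt_of_lt_of_le h1 (min_le_right _ _))
      have h65 : h ^ 6 ≤ h ^ 5 := pow_le_pow_of_le_one h0.le h11 (by norm_num)
      have hub := (abs_le.mp hb').2
      have hC6 : C * h ^ 6 ≤ C * h ^ 5 := mul_le_mul_of_nonneg_left h65 hC.le
      simp only [wenoTau4]
      linarith [hub, hC6]
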